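/- Let A be a ★-Green biset functor, G a group in its domain, and N ⊴ G. Then the deflated-inflation map satisfies dAInf_{G/N}^G(ω•) = (dAInf_{G/N}^G(ω))• for every ω ∈ Aut_{P_A}(G/N); consequently dAInf_{G/N}^G restricts to a group monomorphism Aut_{P_A}(G/N)^⊥ → Aut_{P_A}(G)^⊥, and if dAInf_{G/N}^G(ω) is orthogonal then ω is orthogonal. -/

import Mathlib

set_option autoImplicit false
set_option maxHeartbeats 400000

/-! # Bisets

An `(H,G)`-biset is modelled as a finite `(H × G)`-set, via the usual dictionary
`(h,g) • x = h · x · g⁻¹`. -/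

structure Biset (H G : Type) [Group H] [Group G] : Type 1 where
  carrier : Type
  fin : Finite carrier
  smul : H × G → carrier → carrier
  one_smul' : ∀ x, smul 1 x = x
  mul_smul' : ∀ a b x, smul (a * b) x = smul a (smul b x)

namespace Biset

variable {G H K L : Type} [Group G] [Group H] [Group K] [Group L]

/-- An isomorphism of bisets: an equivariant bijection. -/
structure Iso (X Y : Biset H G) where
  toEquiv : X.carrier ≃ Y.carrier
  equivariant : ∀ a x, toEquiv (X.smul a x) = Y.smul a (toEquiv x)

/-- The relation defining the composition `Y ∘ X = Y ×_H X`. -/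
def compRel (Y : Biset K H) (X : Biset H G) :
    Y.carrier × X.carrier → Y.carrier × X.carrier → Prop := fun p q =>
  ∃ h : H, q.1 = Y.smul (1, h) p.1 ∧ q.2 = X.smul (h, 1) p.2

/-- Composition of bisets, `Y ∘ X = (Y × X)/H`. -/
def comp (Y : Biset K H) (X : Biset H G) : Biset K G where
  carrier := Quot (compRel Y X)
  fin := by
    have := Y.fin; have := X.fin
    exact Finite.of_surjective (Quot.mk _) fun q => Quot.inductionOn q fun a => ⟨a, rfl⟩
  smul a := Quot.map (fun p => (Y.smul (a.1, 1) p.1, X.smul (1, a.2) p.2)) (by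
    rintro ⟨y, x⟩ ⟨y', x'⟩ ⟨h, h1, h2⟩
    dsimp only at h1 h2
    refine ⟨h, ?_, ?_⟩
    · dsimp only
      rw [h1, ← Y.mul_smul', ← Y.mul_smul',
        show ((a.1, (1 : H)) : K × H) * (1, h) = ((1 : K), h) * (a.1, 1) by ext <;> simp]
    · dsimp only
      rw [h2, ← X.mul_smul', ← X.mul_smul',
        show (((1 : H), a.2) : H × G) * (h, 1) = (h, (1 : G)) * (1, a.2) by ext <;> simp])
  one_smul' x := Quot.inductionOn x fun p => by
    show Quot.mk _ (Y.smul (1, 1) p.1, X.smul (1, 1) p.2) = Quot.mk _ p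
    rw [show ((1, 1) : K × H) = 1 from rfl, show ((1, 1) : H × G) = 1 from rfl,
      Y.one_smul', X.one_smul']
  mul_smul' a b x := Quot.inductionOn x fun p => by
    show Quot.mk _ (Y.smul ((a * b).1, 1) p.1, X.smul (1, (a * b).2) p.2) = _
    have h1 : (((a * b).1, (1 : H)) : K × H) = (a.1, 1) * (b.1, 1) := by ext <;> simp
    have h2 : (((1 : H), (a * b).2) : H × G) = (1, a.2) * (1, b.2) := by ext <;> simp
    rw [h1, h2, Y.mul_smul', X.mul_smul']
    rfl

/-- The biset built from two homomorphisms into a group `M`, with two-sided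
multiplication action. -/
def ofHoms {M : Type} [Group M] [Finite M] (f : H →* M) (g : G →* M) : Biset H G where
  carrier := M
  fin := inferInstance
  smul a x := f a.1 * x * (g a.2)⁻¹
  one_smul' x := by simp
  mul_smul' a b x := by simp [mul_assoc]

/-- The induction biset `Ind(φ)` along `φ : G →* H`. -/
def ind {G H : Type} [Group G] [Group H] [Finite H] (φ : G →* H) : Biset H G :=
  ofHoms (MonoidHom.id H) φ

/-- The restriction biset `Res(φ)` along `φ : G →* H`. -/
def res {G H : Type} [Group G] [Group H] [Finite H] (φ : G →* H) : Biset G H :=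
  ofHoms φ (MonoidHom.id H)

/-- `Iso(φ)` for a group isomorphism `φ`. -/
def isoB {G H : Type} [Group G] [Group H] [Finite H] (e : G ≃* H) : Biset H G :=
  ind e.toMonoidHom

/-- The identity `(G,G)`-biset (the regular biset). -/
def idB (G : Type) [Group G] [Finite G] : Biset G G := ind (MonoidHom.id G)

/-- `→G` : the group `G` as a `(G × G, 1)`-biset. -/
def arrow (G : Type) [Group G] [Finite G] : Biset (G × G) PUnit where
  carrier := G
  fin := inferInstance
  smul a x := a.1.1 * x * a.1.2⁻¹
  one_smul' x := by simp
  mul_smul' a b x := by simp [mul_assoc]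

/-- An `(H,G)`-biset regarded as an `(H × G, 1)`-biset. -/
def oneSided (X : Biset H G) : Biset (H × G) PUnit where
  carrier := X.carrier
  fin := X.fin
  smul a x := X.smul a.1 x
  one_smul' := X.one_smul'
  mul_smul' a b x := X.mul_smul' a.1 b.1 x

/-- The opposite biset `X^op` of an `(H,G)`-biset: `g·x·h = h⁻¹ x g⁻¹`. -/
def op (X : Biset H G) : Biset G H where
  carrier := X.carrier
  fin := X.fin
  smul a x := X.smul (a.2, a.1) x
  one_smul' := X.one_smul'
  mul_smul' a b x := X.mul_smul' (a.2, a.1) (b.2, b.1) x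

/-- The biset `K × ←H × G` implementing composition in associated categories,
as a `(K × G, (K × H) × (H × G))`-biset. -/
def middle (K H G : Type) [Group K] [Group H] [Group G] [Finite K] [Finite H] [Finite G] :
    Biset (K × G) ((K × H) × (H × G)) where
  carrier := K × H × G
  fin := inferInstance
  smul a x :=
    (a.1.1 * x.1 * a.2.1.1⁻¹, a.2.1.2 * x.2.1 * a.2.2.1⁻¹, a.2.2.2 * x.2.2 * a.1.2⁻¹)
  one_smul' x := by obtain ⟨x1, x2, x3⟩ := x; simp
  mul_smul' a b x := by
    obtain ⟨⟨k, g⟩, ⟨k', h₁⟩, ⟨h₂, g'⟩⟩ := a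
    obtain ⟨⟨k2, g2⟩, ⟨k2', h₁2⟩, ⟨h₂2, g'2⟩⟩ := b
    obtain ⟨x1, x2, x3⟩ := x
    simp [mul_assoc]

/-- The biset `H × ←G` implementing the action of `Hom_{P_A}(G,H)` on `A(G)`,
as an `(H, (H × G) × G)`-biset. -/
def half (H G : Type) [Group H] [Group G] [Finite H] [Finite G] :
    Biset H ((H × G) × G) where
  carrier := H × G
  fin := inferInstance
  smul a x := (a.1 * x.1 * a.2.1.1⁻¹, a.2.1.2 * x.2 * a.2.2⁻¹)
  one_smul' x := by obtain ⟨x1, x2⟩ := x; simp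
  mul_smul' a b x := by
    obtain ⟨h, ⟨h', g₁⟩, g₂⟩ := a
    obtain ⟨h2, ⟨h'2, g₁2⟩, g₂2⟩ := b
    obtain ⟨x1, x2⟩ := x
    simp [mul_assoc]

/-- The biset `H × ←G × ←G × H`, as an
`(H × H, (H × G) × ((G × G) × (G × H)))`-biset. -/
def middle4 (H G : Type) [Group H] [Group G] [Finite H] [Finite G] :
    Biset (H × H) ((H × G) × ((G × G) × (G × H))) where
  carrier := H × G × G × H
  fin := inferInstance
  smul a x :=
    (a.1.1 * x.1 * a.2.1.1⁻¹, a.2.1.2 * x.2.1 * a.2.2.1.1⁻¹,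
      a.2.2.1.2 * x.2.2.1 * a.2.2.2.1⁻¹, a.2.2.2.2 * x.2.2.2 * a.1.2⁻¹)
  one_smul' x := by obtain ⟨x1, x2, x3, x4⟩ := x; simp
  mul_smul' a b x := by
    obtain ⟨⟨p, q⟩, ⟨h₁, g₁⟩, ⟨g₂, g₃⟩, ⟨g₄, h₂⟩⟩ := a
    obtain ⟨⟨pb, qb⟩, ⟨h₁b, g₁b⟩, ⟨g₂b, g₃b⟩, ⟨g₄b, h₂b⟩⟩ := b
    obtain ⟨x1, x2, x3, x4⟩ := x
    simp [mul_assoc]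

/-- External product of bisets. -/
def bprod (X : Biset H G) (Y : Biset L K) : Biset (H × L) (G × K) where
  carrier := X.carrier × Y.carrier
  fin := by have := X.fin; have := Y.fin; exact inferInstance
  smul a p := (X.smul (a.1.1, a.2.1) p.1, Y.smul (a.1.2, a.2.2) p.2)
  one_smul' p := by
    show (X.smul 1 p.1, Y.smul 1 p.2) = p
    rw [X.one_smul', Y.one_smul']
  mul_smul' a b p := by
    show (X.smul ((a.1.1, a.2.1) * (b.1.1, b.2.1)) p.1,
          Y.smul ((a.1.2, a.2.2) * (b.1.2, b.2.2)) p.2) = _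
    rw [X.mul_smul', Y.mul_smul']

/-- Disjoint union of bisets. -/
def bsum (X Y : Biset H G) : Biset H G where
  carrier := X.carrier ⊕ Y.carrier
  fin := by have := X.fin; have := Y.fin; exact inferInstance
  smul a p := Sum.map (X.smul a) (Y.smul a) p
  one_smul' p := by cases p <;> simp [Sum.map, X.one_smul', Y.one_smul']
  mul_smul' a b p := by cases p <;> simp [Sum.map, X.mul_smul', Y.mul_smul']

end Biset

/-- The diagonal homomorphism `G →* G × G`. -/
def diagHom (G : Type) [Group G] : G →* G × G := (MonoidHom.id G).prod (MonoidHom.id G)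

/-! # Green biset functors -/

/-- A Green biset functor over `k` (with domain all finite groups): a biset functor
with compatible `k`-algebra structures on evaluations, such that restrictions are
algebra homomorphisms and the Frobenius identities hold. -/
structure GreenBF (k : Type) [CommRing k] : Type 2 where
  obj : (G : Type) → [Group G] → [Fintype G] → Type
  ring : (G : Type) → [Group G] → [Fintype G] → Ring (obj G)
  alg : (G : Type) → [Group G] → [Fintype G] → haveI := ring G; Algebra k (obj G)
  map : {G H : Type} → [Group G] → [Fintype G] → [Group H] → [Fintype H] →
    Biset H G → obj G → obj H
  map_add : ∀ {G H : Type} [Group G] [Fintype G] [Group H] [Fintype H]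
    (X : Biset H G) (a b : obj G),
    haveI := ring G; haveI := ring H
    map X (a + b) = map X a + map X b
  map_smul : ∀ {G H : Type} [Group G] [Fintype G] [Group H] [Fintype H]
    (X : Biset H G) (c : k) (a : obj G),
    haveI := ring G; haveI := ring H; haveI := alg G; haveI := alg H
    map X (c • a) = c • map X a
  map_iso : ∀ {G H : Type} [Group G] [Fintype G] [Group H] [Fintype H]
    (X Y : Biset H G), Biset.Iso X Y → ∀ a, map X a = map Y a
  map_id : ∀ {G : Type} [Group G] [Fintype G] (a : obj G), map (Biset.idB G) a = a
  map_comp : ∀ {G H K : Type} [Group G] [Fintype G] [Group H] [Fintype H]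
    [Group K] [Fintype K] (Y : Biset K H) (X : Biset H G) (a : obj G),
    map (Y.comp X) a = map Y (map X a)
  map_bsum : ∀ {G H : Type} [Group G] [Fintype G] [Group H] [Fintype H]
    (X Y : Biset H G) (a : obj G),
    haveI := ring H
    map (X.bsum Y) a = map X a + map Y a
  res_mul : ∀ {G H : Type} [Group G] [Fintype G] [Group H] [Fintype H]
    (φ : G →* H) (a b : obj H),
    haveI := ring G; haveI := ring H
    map (Biset.res φ) (a * b) = map (Biset.res φ) a * map (Biset.res φ) b
  res_one : ∀ {G H : Type} [Group G] [Fintype G] [Group H] [Fintype H] (φ : G →* H),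
    haveI := ring G; haveI := ring H
    map (Biset.res φ) (1 : obj H) = 1
  frob1 : ∀ {G H : Type} [Group G] [Fintype G] [Group H] [Fintype H]
    (φ : G →* H) (a : obj H) (b : obj G),
    haveI := ring G; haveI := ring H
    a * map (Biset.ind φ) b = map (Biset.ind φ) (map (Biset.res φ) a * b)
  frob2 : ∀ {G H : Type} [Group G] [Fintype G] [Group H] [Fintype H]
    (φ : G →* H) (a : obj H) (b : obj G),
    haveI := ring G; haveI := ring H
    map (Biset.ind φ) b * a = map (Biset.ind φ) (b * map (Biset.res φ) a)

namespace GreenBF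

variable {k : Type} [CommRing k]

/-- The identity element `ε_A ∈ A(1)`. -/
def one1 (A : GreenBF k) : A.obj PUnit := haveI := A.ring PUnit; 1

/-- The external (bilinear) product `a × b ∈ A(G × H)`. -/
def xprod (A : GreenBF k) {G H : Type} [Group G] [Fintype G] [Group H] [Fintype H]
    (a : A.obj G) (b : A.obj H) : A.obj (G × H) :=
  haveI := A.ring (G × H)
  A.map (Biset.res (MonoidHom.fst G H)) a * A.map (Biset.res (MonoidHom.snd G H)) b

/-- Composition in the associated category `P_A` :
`Hom(G,H) = A(H × G)`, `α ∘ β = A(K×←H×G)(α × β)`. -/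
def pcomp (A : GreenBF k) {G H K : Type} [Group G] [Fintype G] [Group H] [Fintype H]
    [Group K] [Fintype K] (α : A.obj (K × H)) (β : A.obj (H × G)) : A.obj (K × G) :=
  A.map (Biset.middle K H G) (A.xprod α β)

/-- The identity morphism of `G` in `P_A` : `Id_G = A(→G)(ε_A)`. -/
def catId (A : GreenBF k) (G : Type) [Group G] [Fintype G] : A.obj (G × G) :=
  A.map (Biset.arrow G) A.one1

/-- The tilde map `ã = A(Ind Δ)(a) ∈ End_{P_A}(G)`. -/
def tilde (A : GreenBF k) {G : Type} [Group G] [Fintype G] (a : A.obj G) : A.obj (G × G) :=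
  A.map (Biset.ind (diagHom G)) a

/-- The image `e_{H×G}(→x) ∈ A(H × G)` of a biset under the initial morphism from
the Burnside functor. -/
def bsElt (A : GreenBF k) {G H : Type} [Group G] [Fintype G] [Group H] [Fintype H]
    (x : Biset H G) : A.obj (H × G) :=
  A.map x.oneSided A.one1

/-- The functor of double algebras: `E_A(x)(α) = e(→x) ∘ α ∘ e(→x^op)`. -/
def EA (A : GreenBF k) {G H : Type} [Group G] [Fintype G] [Group H] [Fintype H]
    (x : Biset H G) (α : A.obj (G × G)) : A.obj (H × H) :=
  A.pcomp (A.bsElt x) (A.pcomp α (A.bsElt x.op))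

/-- The action of `Hom_{P_A}(G,H) = A(H × G)` on `A(G)` : `A(α)(b)`. -/
def actOn (A : GreenBF k) {G H : Type} [Group G] [Fintype G] [Group H] [Fintype H]
    (α : A.obj (H × G)) (b : A.obj G) : A.obj H :=
  A.map (Biset.half H G) (A.xprod α b)

/-- The generalized inflation of endomorphisms
`ω ↦ Id_G + E_A(Inf)(ω − Id_Q)` along `π : G →* Q`. -/
def dAInf (A : GreenBF k) {G Q : Type} [Group G] [Fintype G] [Group Q] [Fintype Q]
    (π : G →* Q) (ω : A.obj (Q × Q)) : A.obj (G × G) :=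
  haveI := A.ring (G × G); haveI := A.ring (Q × Q)
  A.catId G + A.EA (Biset.res π) (ω - A.catId Q)

/-- An endomorphism `α ∈ End_{P_A}(G)`... more generally a morphism in `P_A` which is
an isomorphism. -/
def IsIsoP (A : GreenBF k) {G H : Type} [Group G] [Fintype G] [Group H] [Fintype H]
    (ω : A.obj (H × G)) : Prop :=
  ∃ ω' : A.obj (G × H), A.pcomp ω ω' = A.catId H ∧ A.pcomp ω' ω = A.catId G

/-- The opposite Green biset functor `A^op`. -/
def opp (A : GreenBF k) : GreenBF k where
  obj G := (A.obj G)ᵐᵒᵖ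
  ring G := letI := A.ring G; inferInstance
  alg G := letI := A.ring G; letI := A.alg G; inferInstance
  map X a := MulOpposite.op (A.map X a.unop)
  map_add := by
    intro G H _ _ _ _ X a b
    letI := A.ring G; letI := A.ring H
    apply MulOpposite.unop_injective
    exact A.map_add X a.unop b.unop
  map_smul := by
    intro G H _ _ _ _ X c a
    letI := A.ring G; letI := A.ring H; letI := A.alg G; letI := A.alg H
    apply MulOpposite.unop_injective
    exact A.map_smul X c a.unop
  map_iso := by
    intro G H _ _ _ _ X Y e a
    exact congrArg MulOpposite.op (A.map_iso X Y e a.unop)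
  map_id := by
    intro G _ _ a
    apply MulOpposite.unop_injective
    exact A.map_id a.unop
  map_comp := by
    intro G H K _ _ _ _ _ _ Y X a
    exact congrArg MulOpposite.op (A.map_comp Y X a.unop)
  map_bsum := by
    intro G H _ _ _ _ X Y a
    letI := A.ring H
    apply MulOpposite.unop_injective
    exact A.map_bsum X Y a.unop
  res_mul := by
    intro G H _ _ _ _ φ a b
    letI := A.ring G; letI := A.ring H
    apply MulOpposite.unop_injective
    exact A.res_mul φ b.unop a.unop
  res_one := by
    intro G H _ _ _ _ φ
    letI := A.ring G; letI := A.ring H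
    apply MulOpposite.unop_injective
    exact A.res_one φ
  frob1 := by
    intro G H _ _ _ _ φ a b
    letI := A.ring G; letI := A.ring H
    apply MulOpposite.unop_injective
    exact A.frob2 φ a.unop b.unop
  frob2 := by
    intro G H _ _ _ _ φ a b
    letI := A.ring G; letI := A.ring H
    apply MulOpposite.unop_injective
    exact A.frob1 φ a.unop b.unop

end GreenBF

/-- A morphism of Green biset functors. -/
structure GreenHom {k : Type} [CommRing k] (A C : GreenBF k) : Type 1 where
  app : ∀ (G : Type) [Group G] [Fintype G], A.obj G → C.obj G
  natural : ∀ {G H : Type} [Group G] [Fintype G] [Group H] [Fintype H]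
    (X : Biset H G) (a : A.obj G), app H (A.map X a) = C.map X (app G a)
  app_add : ∀ (G : Type) [Group G] [Fintype G] (a b : A.obj G),
    haveI := A.ring G; haveI := C.ring G
    app G (a + b) = app G a + app G b
  app_smul : ∀ (G : Type) [Group G] [Fintype G] (c : k) (a : A.obj G),
    haveI := A.ring G; haveI := C.ring G; haveI := A.alg G; haveI := C.alg G
    app G (c • a) = c • app G a
  app_mul : ∀ (G : Type) [Group G] [Fintype G] (a b : A.obj G),
    haveI := A.ring G; haveI := C.ring G
    app G (a * b) = app G a * app G b
  app_one : ∀ (G : Type) [Group G] [Fintype G],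
    haveI := A.ring G; haveI := C.ring G
    app G (1 : A.obj G) = 1

/-- An anti-involution on a Green biset functor: a biset functor endomorphism with
`a★★ = a` and `(ab)★ = b★ a★`. -/
structure AntiInvol {k : Type} [CommRing k] (A : GreenBF k) : Type 1 where
  app : ∀ (G : Type) [Group G] [Fintype G], A.obj G → A.obj G
  natural : ∀ {G H : Type} [Group G] [Fintype G] [Group H] [Fintype H]
    (X : Biset H G) (a : A.obj G), app H (A.map X a) = A.map X (app G a)
  app_add : ∀ (G : Type) [Group G] [Fintype G] (a b : A.obj G),
    haveI := A.ring G
    app G (a + b) = app G a + app G b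
  app_smul : ∀ (G : Type) [Group G] [Fintype G] (c : k) (a : A.obj G),
    haveI := A.ring G; haveI := A.alg G
    app G (c • a) = c • app G a
  invol : ∀ (G : Type) [Group G] [Fintype G] (a : A.obj G), app G (app G a) = a
  anti : ∀ (G : Type) [Group G] [Fintype G] (a b : A.obj G),
    haveI := A.ring G
    app G (a * b) = app G b * app G a

namespace GreenBF

variable {k : Type} [CommRing k]

/-- The duality `_^• = T ∘ P_δ` on the associated category induced by an
anti-involution: `α^• = A(Iso τ)(α★)`. -/
def bull (A : GreenBF k) (s : AntiInvol A) {G H : Type} [Group G] [Fintype G]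
    [Group H] [Fintype H] (α : A.obj (H × G)) : A.obj (G × H) :=
  A.map (Biset.isoB (MulEquiv.prodComm : H × G ≃* G × H)) (s.app (H × G) α)

/-- An orthogonal isomorphism in `P_A` : `ω^• = ω⁻¹`. -/
def IsOrthIso (A : GreenBF k) (s : AntiInvol A) {G H : Type} [Group G] [Fintype G]
    [Group H] [Fintype H] (ω : A.obj (H × G)) : Prop :=
  A.pcomp ω (A.bull s ω) = A.catId H ∧ A.pcomp (A.bull s ω) ω = A.catId G

end GreenBF

/-! ## Auxiliary development -/

namespace Biset

variable {G H K L D : Type} [Group G] [Group H] [Group K] [Group L] [Group D]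

lemma smul_mul (X : Biset H G) (a b : H × G) (x : X.carrier) :
    X.smul a (X.smul b x) = X.smul (a * b) x := (X.mul_smul' a b x).symm

lemma smul_cancel (X : Biset H G) (a : H × G) (x : X.carrier) :
    X.smul a⁻¹ (X.smul a x) = x := by
  rw [smul_mul, inv_mul_cancel, X.one_smul']

/-- Pull back the left action along a hom. -/
def pulll (φ : K →* H) (X : Biset H G) : Biset K G where
  carrier := X.carrier
  fin := X.fin
  smul a x := X.smul (φ a.1, a.2) x
  one_smul' x := by
    show X.smul (φ 1, 1) x = x
    rw [map_one]; exact X.one_smul' x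
  mul_smul' a b x := by
    show X.smul (φ (a.1 * b.1), a.2 * b.2) x
      = X.smul (φ a.1, a.2) (X.smul (φ b.1, b.2) x)
    rw [smul_mul, Prod.mk_mul_mk, map_mul]

/-- Pull back the right action along a hom. -/
def pullr (φ : G →* H) (X : Biset K H) : Biset K G where
  carrier := X.carrier
  fin := X.fin
  smul a x := X.smul (a.1, φ a.2) x
  one_smul' x := by
    show X.smul (1, φ 1) x = x
    rw [map_one]; exact X.one_smul' x
  mul_smul' a b x := by
    show X.smul (a.1 * b.1, φ (a.2 * b.2)) x
      = X.smul (a.1, φ a.2) (X.smul (b.1, φ b.2) x)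
    rw [smul_mul, Prod.mk_mul_mk, map_mul]

/-- `(res φ) ∘ X ≅ pulll φ X`. -/
noncomputable def isoCompRes [Finite H] (φ : K →* H) (X : Biset H G) :
    Iso ((Biset.res φ).comp X) (pulll φ X) where
  toEquiv := Equiv.ofBijective
    (Quot.lift (fun p : H × X.carrier => X.smul (p.1, 1) p.2) (by
      rintro ⟨m0, x⟩ ⟨m', x'⟩ ⟨h, h1, h2⟩
      dsimp only at h1 h2
      subst h1; subst h2
      have m : H := m0
      show X.smul (show H from m0, 1) x
        = X.smul (φ 1 * (show H from m0) * h⁻¹, 1) (X.smul (h, 1) x)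
      rw [smul_mul, Prod.mk_mul_mk, map_one, one_mul, mul_one,
        inv_mul_cancel_right]))
    (by
      constructor
      · intro p q
        induction p using Quot.inductionOn with | _ a =>
        induction q using Quot.inductionOn with | _ b =>
        intro hEq
        have key : ∀ c : H × X.carrier,
            Quot.mk (compRel (Biset.res φ) X) c
              = Quot.mk _ ((1 : H), X.smul ((show H from c.1), 1) c.2) := by
          intro c
          apply Quot.sound
          refine ⟨(show H from c.1), ?_, rfl⟩
          show (1 : H) = φ 1 * (show H from c.1) * (show H from c.1)⁻¹
          simp
        rw [key a, key b]
        show Quot.mk _ ((1:H), X.smul ((show H from a.1), 1) a.2)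
          = Quot.mk _ ((1:H), X.smul ((show H from b.1), 1) b.2)
        exact congrArg _ (congrArg _ hEq)
      · intro x
        refine ⟨Quot.mk _ ((1 : H), x), ?_⟩
        show X.smul (1, 1) x = x
        exact X.one_smul' x)
  equivariant := by
    intro a p
    induction p using Quot.inductionOn with | _ c =>
    show X.smul (φ a.1 * (show H from c.1) * 1⁻¹, 1) (X.smul (1, a.2) c.2)
      = X.smul (φ a.1, a.2) (X.smul ((show H from c.1), 1) c.2)
    rw [smul_mul, smul_mul, Prod.mk_mul_mk, Prod.mk_mul_mk]
    simp

/-- `X ∘ (ind φ) ≅ pullr φ X`. -/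
noncomputable def isoCompInd [Finite H] (X : Biset K H) (φ : G →* H) :
    Iso (X.comp (Biset.ind φ)) (pullr φ X) where
  toEquiv := Equiv.ofBijective
    (Quot.lift (fun p : X.carrier × H => X.smul (1, p.2⁻¹) p.1) (by
      rintro ⟨x, m⟩ ⟨x', m'⟩ ⟨h, h1, h2⟩
      dsimp only at h1 h2
      subst h1; subst h2
      show X.smul (1, (show H from m)⁻¹) x
        = X.smul (1, (h * (show H from m) * (φ 1)⁻¹)⁻¹) (X.smul (1, h) x)
      rw [smul_mul, Prod.mk_mul_mk, map_one]
      simp [mul_assoc]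
      exact congrArg (fun z : H => X.smul (1, z) x)
        ((congrArg (· * h) (mul_inv_rev h (m : H))).trans (inv_mul_cancel_right _ h)).symm))
    (by
      constructor
      · intro p q
        induction p using Quot.inductionOn with | _ a =>
        induction q using Quot.inductionOn with | _ b =>
        intro hEq
        have key : ∀ c : X.carrier × H,
            Quot.mk (compRel X (Biset.ind φ)) c
              = Quot.mk _ (X.smul (1, (show H from c.2)⁻¹) c.1, (1 : H)) := by
          intro c
          apply Quot.sound
          refine ⟨(show H from c.2)⁻¹, rfl, ?_⟩
          show (1 : H) = (show H from c.2)⁻¹ * (show H from c.2) * (φ 1)⁻¹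
          simp
        rw [key a, key b]
        show Quot.mk _ (X.smul (1, (show H from a.2)⁻¹) a.1, (1:H))
          = Quot.mk _ (X.smul (1, (show H from b.2)⁻¹) b.1, (1:H))
        exact congrArg _ (congrArg (fun z => (z, (1:H))) hEq)
      · intro x
        refine ⟨Quot.mk _ (x, (1 : H)), ?_⟩
        show X.smul (1, 1⁻¹) x = x
        rw [inv_one]; exact X.one_smul' x)
  equivariant := by
    intro a p
    induction p using Quot.inductionOn with | _ c =>
    show X.smul (1, (1 * (show H from c.2) * (φ a.2)⁻¹)⁻¹) (X.smul (a.1, 1) c.1)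
      = X.smul (a.1, φ a.2) (X.smul (1, (show H from c.2)⁻¹) c.1)
    rw [smul_mul, smul_mul, Prod.mk_mul_mk, Prod.mk_mul_mk]
    simp [mul_assoc]
    exact congrArg (fun z : H => X.smul (a.1, φ a.2 * z⁻¹) c.1) (one_mul (M := H) c.2)

/-- The orbit isomorphism. -/
noncomputable def orbitIso [Finite H] [Finite G] (X : Biset H G) (x₀ : X.carrier)
    (u : D →* H) (v : D →* G)
    (h0 : ∀ d, X.smul (u d, v d) x₀ = x₀)
    (hfull : ∀ a : H × G, X.smul a x₀ = x₀ → ∃ d, u d = a.1 ∧ v d = a.2)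
    (htrans : ∀ x, ∃ a : H × G, X.smul a x₀ = x) :
    Iso ((Biset.ind u).comp (Biset.res v)) X where
  toEquiv := Equiv.ofBijective
    (Quot.lift (fun p : H × G => X.smul (p.1, p.2⁻¹) x₀) (by
      rintro ⟨h₁, g₁⟩ ⟨h₂, g₂⟩ ⟨d, hd1, hd2⟩
      dsimp only at hd1 hd2
      subst hd1; subst hd2
      show X.smul ((show H from h₁), (show G from g₁)⁻¹) x₀
        = X.smul (1 * (show H from h₁) * (u d)⁻¹,
            (v d * (show G from g₁) * 1⁻¹)⁻¹) x₀
      have e1 : ((1 : H) * (show H from h₁) * (u d)⁻¹,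
            (v d * (show G from g₁) * 1⁻¹)⁻¹)
          = ((show H from h₁), (show G from g₁)⁻¹) * (u d, v d)⁻¹ := by
        rw [Prod.inv_mk, Prod.mk_mul_mk]
        refine Prod.ext ?_ ?_
        · simp [mul_comm]
          exact congrArg (· * (u d)⁻¹) (one_mul (M := H) h₁)
        · simp [mul_comm]
          exact mul_inv_rev (v d) (g₁ : G)
      rw [e1, ← smul_mul]
      conv_rhs => rw [← h0 d, smul_cancel]))
    (by
      constructor
      · intro p q
        induction p using Quot.inductionOn with | _ a =>
        induction q using Quot.inductionOn with | _ b =>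
        intro hEq
        have hEq' : X.smul ((show H from a.1), (show G from a.2)⁻¹) x₀
            = X.smul ((show H from b.1), (show G from b.2)⁻¹) x₀ := hEq
        have hfix : X.smul (((show H from b.1), (show G from b.2)⁻¹)⁻¹
            * ((show H from a.1), (show G from a.2)⁻¹)) x₀ = x₀ := by
          rw [← smul_mul, hEq', smul_cancel]
        obtain ⟨d, hd1, hd2⟩ := hfull _ hfix
        rw [Prod.inv_mk, Prod.mk_mul_mk] at hd1 hd2
        dsimp only at hd1 hd2
        apply Quot.sound
        refine ⟨d, ?_, ?_⟩
        · show (show H from b.1) = 1 * (show H from a.1) * (u d)⁻¹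
          rw [hd1]; exact (by intro x y; group : ∀ x y : H, x = 1 * y * (x⁻¹ * y)⁻¹) _ _
        · show (show G from b.2) = v d * (show G from a.2) * 1⁻¹
          rw [hd2]; exact (by intro x y; group : ∀ x y : G, x = x⁻¹⁻¹ * y⁻¹ * y * 1⁻¹) _ _
      · intro x
        obtain ⟨a, ha⟩ := htrans x
        refine ⟨Quot.mk _ (show H × G from (a.1, a.2⁻¹)), ?_⟩
        show X.smul (a.1, a.2⁻¹⁻¹) x₀ = x
        rw [inv_inv]
        exact ha)
  equivariant := by
    intro a p
    induction p using Quot.inductionOn with | _ c =>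
    show X.smul (a.1 * (show H from c.1) * (u 1)⁻¹,
        (v 1 * (show G from c.2) * a.2⁻¹)⁻¹) x₀
      = X.smul a (X.smul ((show H from c.1), (show G from c.2)⁻¹) x₀)
    rw [smul_mul, map_one, map_one]
    have ha : a = (a.1, a.2) := rfl
    rw [ha, Prod.mk_mul_mk]
    congr 1
    refine Prod.ext ?_ ?_ <;> simp [mul_assoc] <;> exact congrArg (·⁻¹) (one_mul (M := G) c.2)

/-- `ind e ≅ res e.symm` for a group isomorphism. -/
noncomputable def isoIndRes [Finite H] [Finite G] (e : G ≃* H) :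
    Iso (Biset.ind e.toMonoidHom) (Biset.res e.symm.toMonoidHom) where
  toEquiv := e.symm.toEquiv
  equivariant := by
    intro a x
    show e.symm (a.1 * (show H from x) * (e a.2)⁻¹)
      = e.symm a.1 * e.symm (show H from x) * a.2⁻¹
    simp
    exact map_mul e.symm _ _

end Biset

/-! ## Hom plumbing -/

/-- Projection `K × H × G →* K × H`. -/
def mhA {K H G : Type} [Group K] [Group H] [Group G] : K × H × G →* K × H :=
  MonoidHom.mk' (fun x => (x.1, x.2.1)) (fun _ _ => rfl)

/-- Projection `K × H × G →* H × G`. -/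
def mhB {K H G : Type} [Group K] [Group H] [Group G] : K × H × G →* H × G :=
  MonoidHom.snd _ _

/-- Projection `K × H × G →* K × G`. -/
def mhC {K H G : Type} [Group K] [Group H] [Group G] : K × H × G →* K × G :=
  MonoidHom.mk' (fun x => (x.1, x.2.2)) (fun _ _ => rfl)

namespace GreenBF

variable {k : Type} [CommRing k] (A : GreenBF k)

section maps

variable {G H : Type} [Group G] [Fintype G] [Group H] [Fintype H]

lemma map_zero' (X : Biset H G) :
    A.map X (haveI := A.ring G; (0 : A.obj G)) = (haveI := A.ring H; (0 : A.obj H)) := by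
  letI := A.ring G; letI := A.ring H
  have h := A.map_add X 0 0
  rw [add_zero] at h
  exact left_eq_add.mp h

lemma map_sub' (X : Biset H G) (a b : A.obj G) :
    haveI := A.ring G; haveI := A.ring H
    A.map X (a - b) = A.map X a - A.map X b := by
  letI := A.ring G; letI := A.ring H
  have h : A.map X (a - b) + A.map X b = A.map X a := by
    rw [← A.map_add, sub_add_cancel]
  exact eq_sub_of_add_eq h

lemma map_res_res (φ : G →* H) {K : Type} [Group K] [Fintype K] (ψ : H →* K)
    (a : A.obj K) :
    A.map (Biset.res φ) (A.map (Biset.res ψ) a) = A.map (Biset.res (ψ.comp φ)) a := by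
  rw [← A.map_comp]
  exact A.map_iso _ _ (Biset.isoCompRes φ (Biset.res ψ)) a

lemma map_ind_ind {K : Type} [Group K] [Fintype K] (φ : H →* K) (ψ : G →* H)
    (a : A.obj G) :
    A.map (Biset.ind φ) (A.map (Biset.ind ψ) a) = A.map (Biset.ind (φ.comp ψ)) a := by
  rw [← A.map_comp]
  exact A.map_iso _ _ (Biset.isoCompInd (Biset.ind φ) ψ) a

lemma map_ind_eq_res (e : G ≃* H) (a : A.obj G) :
    A.map (Biset.ind e.toMonoidHom) a = A.map (Biset.res e.symm.toMonoidHom) a :=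
  A.map_iso _ _ (Biset.isoIndRes e) a

lemma res_id (a : A.obj G) : A.map (Biset.res (MonoidHom.id G)) a = a :=
  A.map_id a

lemma ind_id (a : A.obj G) : A.map (Biset.ind (MonoidHom.id G)) a = a :=
  A.map_id a

lemma mackey {K D : Type} [Group K] [Fintype K] [Group D] [Fintype D]
    (ψ : K →* H) (φ : G →* H) (a : D →* K) (b : D →* G)
    (h1 : ∀ d, ψ (a d) = φ (b d))
    (h2 : ∀ p : K × G, ψ p.1 = φ p.2 → ∃ d, a d = p.1 ∧ b d = p.2)
    (h3 : Function.Surjective ψ) (c : A.obj G) :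
    A.map (Biset.res ψ) (A.map (Biset.ind φ) c)
      = A.map (Biset.ind a) (A.map (Biset.res b) c) := by
  rw [← A.map_comp, ← A.map_comp]
  rw [A.map_iso _ _ (Biset.isoCompRes ψ (Biset.ind φ)) c]
  refine (A.map_iso _ _ (Biset.orbitIso (Biset.ofHoms ψ φ)
    (show (Biset.ofHoms ψ φ).carrier from (1 : H)) a b ?_ ?_ ?_) c).symm
  · intro d
    show ψ (a d) * 1 * (φ (b d))⁻¹ = 1
    rw [h1 d]; simp
  · intro p hp
    have hp' : ψ p.1 * 1 * (φ p.2)⁻¹ = 1 := hp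
    rw [mul_one, mul_inv_eq_one] at hp'
    exact h2 p hp'
  · intro x
    obtain ⟨kk, hk⟩ := h3 (show H from x)
    refine ⟨(kk, 1), ?_⟩
    show ψ kk * 1 * (φ 1)⁻¹ = (show H from x)
    rw [hk]; simp
    exact mul_one _

lemma map_surj_inv {Q : Type} [Group Q] [Fintype Q] (π : G →* Q)
    (hπ : Function.Surjective π) (a : A.obj Q) :
    A.map (Biset.ind π) (A.map (Biset.res π) a) = a := by
  rw [← A.map_comp]
  have hiso := A.map_iso _ _ (Biset.orbitIso (Biset.idB Q)
    (show (Biset.idB Q).carrier from (1 : Q)) π π ?_ ?_ ?_) a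
  · rw [hiso]; exact A.map_id a
  · intro d
    show π d * 1 * (π d)⁻¹ = 1
    simp
  · intro p hp
    have hp' : p.1 * 1 * p.2⁻¹ = 1 := hp
    rw [mul_one, mul_inv_eq_one] at hp'
    obtain ⟨d, hd⟩ := hπ p.1
    exact ⟨d, hd, by rw [hd, hp']⟩
  · intro x
    refine ⟨((show Q from x), 1), ?_⟩
    show (show Q from x) * 1 * (1 : Q)⁻¹ = (show Q from x)
    simp
    exact mul_one _

lemma ind_one_surj {Q : Type} [Group Q] [Fintype Q] (π : G →* Q)
    (hπ : Function.Surjective π) :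
    A.map (Biset.ind π) (haveI := A.ring G; (1 : A.obj G))
      = (haveI := A.ring Q; (1 : A.obj Q)) := by
  letI := A.ring G; letI := A.ring Q
  have h := A.map_surj_inv π hπ (1 : A.obj Q)
  rw [A.res_one] at h
  exact h

end maps

/-! ## The normal form for composition in `P_A` -/

section pcompF

variable {K H G : Type} [Group K] [Fintype K] [Group H] [Fintype H] [Group G] [Fintype G]

/-- `middle K H G ≅ ind mhC ∘ res (mhA.prod mhB)`. -/
noncomputable def middleIso :
    Biset.Iso ((Biset.ind (mhC (K := K) (H := H) (G := G))).comp
      (Biset.res (mhA.prod mhB))) (Biset.middle K H G) := by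
  refine Biset.orbitIso (Biset.middle K H G)
    (show (Biset.middle K H G).carrier from (1, 1, 1)) mhC (mhA.prod mhB) ?_ ?_ ?_
  · intro d
    show (d.1 * 1 * d.1⁻¹, d.2.1 * 1 * d.2.1⁻¹, d.2.2 * 1 * d.2.2⁻¹)
      = (show (Biset.middle K H G).carrier from (1, 1, 1))
    refine Prod.ext ?_ (Prod.ext ?_ ?_) <;> simp
  · intro p hp
    have e1 : p.1.1 * 1 * p.2.1.1⁻¹ = 1 := congrArg Prod.fst hp
    have e2 : p.2.1.2 * 1 * p.2.2.1⁻¹ = 1 := congrArg (fun z => z.2.1) hp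
    have e3 : p.2.2.2 * 1 * p.1.2⁻¹ = 1 := congrArg (fun z => z.2.2) hp
    rw [mul_one, mul_inv_eq_one] at e1 e2 e3
    refine ⟨(p.1.1, p.2.1.2, p.1.2), ?_, ?_⟩
    · rfl
    · show ((p.1.1, p.2.1.2), (p.2.1.2, p.1.2)) = p.2
      refine Prod.ext (Prod.ext ?_ ?_) (Prod.ext ?_ ?_) <;> simp [e1, e2, e3]
  · intro x
    refine ⟨((x.1, x.2.2⁻¹), ((1, x.2.1), (1, 1))), ?_⟩
    show (x.1 * 1 * 1⁻¹, x.2.1 * 1 * 1⁻¹, 1 * 1 * x.2.2⁻¹⁻¹)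
      = (show (Biset.middle K H G).carrier from x)
    refine Prod.ext ?_ (Prod.ext ?_ ?_) <;> simp

lemma pcompF (α : A.obj (K × H)) (β : A.obj (H × G)) :
    A.pcomp α β = A.map (Biset.ind (mhC (K := K) (H := H) (G := G)))
      (haveI := A.ring (K × H × G);
        A.map (Biset.res (mhA (K := K) (H := H) (G := G))) α
          * A.map (Biset.res (mhB (K := K) (H := H) (G := G))) β) := by
  letI := A.ring (K × H × G)
  letI := A.ring ((K × H) × (H × G))
  show A.map (Biset.middle K H G) (A.xprod α β) = _
  rw [← A.map_iso _ _ (middleIso (K := K) (H := H) (G := G)) (A.xprod α β)]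
  rw [A.map_comp]
  have hA : (MonoidHom.fst (K × H) (H × G)).comp (mhA.prod mhB)
      = (mhA (K := K) (H := H) (G := G)) := by ext x <;> rfl
  have hB : (MonoidHom.snd (K × H) (H × G)).comp (mhA.prod mhB)
      = (mhB (K := K) (H := H) (G := G)) := by ext x <;> rfl
  have hin : A.map (Biset.res (mhA.prod mhB)) (A.xprod α β)
      = A.map (Biset.res mhA) α * A.map (Biset.res mhB) β := by
    show A.map (Biset.res (mhA.prod mhB))
        (A.map (Biset.res (MonoidHom.fst (K × H) (H × G))) α
          * A.map (Biset.res (MonoidHom.snd (K × H) (H × G))) β) = _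
    rw [A.res_mul, A.map_res_res, A.map_res_res, hA, hB]
  rw [hin]

end pcompF

end GreenBF

/-- Projections from a 4-fold product. -/
def q134 {L K H G : Type} [Group L] [Group K] [Group H] [Group G] :
    L × K × H × G →* L × H × G :=
  MonoidHom.mk' (fun d => (d.1, d.2.2)) (fun _ _ => rfl)

def q123 {L K H G : Type} [Group L] [Group K] [Group H] [Group G] :
    L × K × H × G →* L × K × H :=
  MonoidHom.mk' (fun d => (d.1, d.2.1, d.2.2.1)) (fun _ _ => rfl)

def q124 {L K H G : Type} [Group L] [Group K] [Group H] [Group G] :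
    L × K × H × G →* L × K × G :=
  MonoidHom.mk' (fun d => (d.1, d.2.1, d.2.2.2)) (fun _ _ => rfl)

def q12 {L K H G : Type} [Group L] [Group K] [Group H] [Group G] :
    L × K × H × G →* L × K :=
  MonoidHom.mk' (fun d => (d.1, d.2.1)) (fun _ _ => rfl)

def q23 {L K H G : Type} [Group L] [Group K] [Group H] [Group G] :
    L × K × H × G →* K × H :=
  MonoidHom.mk' (fun d => (d.2.1, d.2.2.1)) (fun _ _ => rfl)

def q34 {L K H G : Type} [Group L] [Group K] [Group H] [Group G] :
    L × K × H × G →* H × G :=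
  MonoidHom.mk' (fun d => d.2.2) (fun _ _ => rfl)

def q14 {L K H G : Type} [Group L] [Group K] [Group H] [Group G] :
    L × K × H × G →* L × G :=
  MonoidHom.mk' (fun d => (d.1, d.2.2.2)) (fun _ _ => rfl)

namespace GreenBF

variable {k : Type} [CommRing k] (A : GreenBF k)

section elements

variable {G H D : Type} [Group G] [Fintype G] [Group H] [Fintype H] [Group D] [Fintype D]

lemma catId_eq : A.catId G
    = A.map (Biset.ind (diagHom G)) (haveI := A.ring G; (1 : A.obj G)) := by
  letI := A.ring G
  letI := A.ring PUnit
  show A.map (Biset.arrow G) A.one1 = _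
  have hiso := A.map_iso _ _ (Biset.orbitIso (Biset.arrow G)
    (show (Biset.arrow G).carrier from (1 : G)) (diagHom G) (1 : G →* PUnit)
    ?_ ?_ ?_) A.one1
  · rw [← hiso, A.map_comp]
    show A.map (Biset.ind (diagHom G))
      (A.map (Biset.res (1 : G →* PUnit)) (1 : A.obj PUnit)) = _
    rw [A.res_one]
  · intro d
    show d * 1 * d⁻¹ = (show (Biset.arrow G).carrier from (1 : G))
    show d * 1 * d⁻¹ = (1 : G)
    simp
  · intro p hp
    have hp' : p.1.1 * 1 * p.1.2⁻¹ = 1 := hp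
    rw [mul_one, mul_inv_eq_one] at hp'
    refine ⟨p.1.1, ?_, Subsingleton.elim _ _⟩
    show (p.1.1, p.1.1) = p.1
    exact Prod.ext rfl hp'
  · intro x
    refine ⟨(((show G from x), 1), PUnit.unit), ?_⟩
    show (show G from x) * 1 * (1 : G)⁻¹ = (show G from x)
    simp
    exact mul_one _

lemma bsElt_eq (x : Biset H G) (x₀ : x.carrier) (u : D →* H × G)
    (h0 : ∀ d, x.smul (u d) x₀ = x₀)
    (hfull : ∀ a : H × G, x.smul a x₀ = x₀ → ∃ d, u d = a)
    (htrans : ∀ z, ∃ a : H × G, x.smul a x₀ = z) :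
    A.bsElt x = A.map (Biset.ind u) (haveI := A.ring D; (1 : A.obj D)) := by
  letI := A.ring D
  letI := A.ring PUnit
  show A.map x.oneSided A.one1 = _
  have hiso := A.map_iso _ _ (Biset.orbitIso x.oneSided x₀ u (1 : D →* PUnit)
    ?_ ?_ ?_) A.one1
  · rw [← hiso, A.map_comp]
    show A.map (Biset.ind u)
      (A.map (Biset.res (1 : D →* PUnit)) (1 : A.obj PUnit)) = _
    rw [A.res_one]
  · intro d
    exact h0 d
  · intro a ha
    obtain ⟨d, hd⟩ := hfull a.1 ha
    exact ⟨d, hd, Subsingleton.elim _ _⟩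
  · intro z
    obtain ⟨w, hw⟩ := htrans z
    exact ⟨(w, PUnit.unit), hw⟩

end elements

section bilinear

variable {K H G : Type} [Group K] [Fintype K] [Group H] [Fintype H] [Group G] [Fintype G]

lemma pcomp_add_left (α β : A.obj (K × H)) (γ : A.obj (H × G)) :
    haveI := A.ring (K × H); haveI := A.ring (K × G)
    A.pcomp (α + β) γ = A.pcomp α γ + A.pcomp β γ := by
  letI := A.ring (K × H); letI := A.ring (K × G); letI := A.ring (K × H × G)
  rw [A.pcompF, A.pcompF, A.pcompF, A.map_add, add_mul, A.map_add]

lemma pcomp_add_right (α : A.obj (K × H)) (β γ : A.obj (H × G)) :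
    haveI := A.ring (H × G); haveI := A.ring (K × G)
    A.pcomp α (β + γ) = A.pcomp α β + A.pcomp α γ := by
  letI := A.ring (H × G); letI := A.ring (K × G); letI := A.ring (K × H × G)
  rw [A.pcompF, A.pcompF, A.pcompF, A.map_add, mul_add, A.map_add]

lemma pcomp_sub_left (α β : A.obj (K × H)) (γ : A.obj (H × G)) :
    haveI := A.ring (K × H); haveI := A.ring (K × G)
    A.pcomp (α - β) γ = A.pcomp α γ - A.pcomp β γ := by
  letI := A.ring (K × H); letI := A.ring (K × G); letI := A.ring (K × H × G)
  rw [A.pcompF, A.pcompF, A.pcompF, A.map_sub', sub_mul, A.map_sub']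

lemma pcomp_sub_right (α : A.obj (K × H)) (β γ : A.obj (H × G)) :
    haveI := A.ring (H × G); haveI := A.ring (K × G)
    A.pcomp α (β - γ) = A.pcomp α β - A.pcomp α γ := by
  letI := A.ring (H × G); letI := A.ring (K × G); letI := A.ring (K × H × G)
  rw [A.pcompF, A.pcompF, A.pcompF, A.map_sub', mul_sub, A.map_sub']

lemma pcomp_zero_left (γ : A.obj (H × G)) :
    A.pcomp (haveI := A.ring (K × H); (0 : A.obj (K × H))) γ
      = (haveI := A.ring (K × G); (0 : A.obj (K × G))) := by
  letI := A.ring (K × H); letI := A.ring (K × G); letI := A.ring (K × H × G)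
  rw [A.pcompF, A.map_zero', zero_mul, A.map_zero']

lemma pcomp_zero_right (α : A.obj (K × H)) :
    A.pcomp α (haveI := A.ring (H × G); (0 : A.obj (H × G)))
      = (haveI := A.ring (K × G); (0 : A.obj (K × G))) := by
  letI := A.ring (H × G); letI := A.ring (K × G); letI := A.ring (K × H × G)
  rw [A.pcompF, A.map_zero', mul_zero, A.map_zero']

lemma pcomp_catId_left (α : A.obj (K × G)) : A.pcomp (A.catId K) α = α := by
  letI := A.ring K
  letI := A.ring (K × K × G)
  letI := A.ring (K × G)
  rw [A.catId_eq, A.pcompF]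
  have hM := A.mackey (mhA (K := K) (H := K) (G := G)) (diagHom K)
    (MonoidHom.mk' (fun p : K × G => (p.1, p.1, p.2)) (fun _ _ => rfl))
    (MonoidHom.fst K G) (fun _ => rfl) ?_ ?_ (1 : A.obj K)
  · rw [hM, A.res_one, A.frob2, one_mul, A.map_res_res]
    have h1 : (mhB (K := K) (H := K) (G := G)).comp
        (MonoidHom.mk' (fun p : K × G => (p.1, p.1, p.2)) (fun _ _ => rfl))
        = MonoidHom.id (K × G) := MonoidHom.ext fun _ => rfl
    rw [h1, A.res_id, A.map_ind_ind]
    have h2 : (mhC (K := K) (H := K) (G := G)).comp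
        (MonoidHom.mk' (fun p : K × G => (p.1, p.1, p.2)) (fun _ _ => rfl))
        = MonoidHom.id (K × G) := MonoidHom.ext fun _ => rfl
    rw [h2, A.ind_id]
  · intro p hp
    have e1 : p.1.1 = p.2 := congrArg Prod.fst hp
    have e2 : p.1.2.1 = p.2 := congrArg Prod.snd hp
    refine ⟨(p.1.1, p.1.2.2), ?_, e1⟩
    show (p.1.1, p.1.1, p.1.2.2) = p.1
    exact Prod.ext rfl (Prod.ext (e1.trans e2.symm) rfl)
  · intro y
    exact ⟨(y.1, y.2, 1), rfl⟩

lemma pcomp_catId_right (α : A.obj (K × G)) : A.pcomp α (A.catId G) = α := by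
  letI := A.ring G
  letI := A.ring (K × G × G)
  letI := A.ring (K × G)
  rw [A.catId_eq, A.pcompF]
  have hM := A.mackey (mhB (K := K) (H := G) (G := G)) (diagHom G)
    (MonoidHom.mk' (fun p : K × G => (p.1, p.2, p.2)) (fun _ _ => rfl))
    (MonoidHom.snd K G) (fun _ => rfl) ?_ ?_ (1 : A.obj G)
  · rw [hM, A.res_one, A.frob1, mul_one, A.map_res_res]
    have h1 : (mhA (K := K) (H := G) (G := G)).comp
        (MonoidHom.mk' (fun p : K × G => (p.1, p.2, p.2)) (fun _ _ => rfl))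
        = MonoidHom.id (K × G) := MonoidHom.ext fun _ => rfl
    rw [h1, A.res_id, A.map_ind_ind]
    have h2 : (mhC (K := K) (H := G) (G := G)).comp
        (MonoidHom.mk' (fun p : K × G => (p.1, p.2, p.2)) (fun _ _ => rfl))
        = MonoidHom.id (K × G) := MonoidHom.ext fun _ => rfl
    rw [h2, A.ind_id]
  · intro p hp
    have e1 : p.1.2.1 = p.2 := congrArg Prod.fst hp
    have e2 : p.1.2.2 = p.2 := congrArg Prod.snd hp
    refine ⟨(p.1.1, p.1.2.1), ?_, e1⟩
    show (p.1.1, p.1.2.1, p.1.2.1) = p.1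
    exact Prod.ext rfl (Prod.ext rfl (e1.trans e2.symm))
  · intro y
    exact ⟨(1, y), rfl⟩

end bilinear

section assoc

variable {L K H G : Type} [Group L] [Fintype L] [Group K] [Fintype K]
  [Group H] [Fintype H] [Group G] [Fintype G]

lemma pcomp_assoc (α : A.obj (L × K)) (β : A.obj (K × H)) (γ : A.obj (H × G)) :
    A.pcomp (A.pcomp α β) γ = A.pcomp α (A.pcomp β γ) := by
  letI := A.ring (L × K); letI := A.ring (K × H); letI := A.ring (H × G)
  letI := A.ring (L × H); letI := A.ring (K × G); letI := A.ring (L × G)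
  letI := A.ring (L × H × G); letI := A.ring (L × K × H); letI := A.ring (L × K × G)
  letI := A.ring (K × H × G); letI := A.ring (L × K × H × G)
  rw [A.pcompF (K := L) (H := K) (G := H) α β,
      A.pcompF (K := L) (H := H) (G := G),
      A.pcompF (K := K) (H := H) (G := G) β γ,
      A.pcompF (K := L) (H := K) (G := G)]
  have hM1 := A.mackey (mhA (K := L) (H := H) (G := G))
    (mhC (K := L) (H := K) (G := H))
    (q134 (L := L) (K := K) (H := H) (G := G))
    (q123 (L := L) (K := K) (H := H) (G := G))
    (fun _ => rfl) ?_ ?_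
    (A.map (Biset.res (mhA (K := L) (H := K) (G := H))) α
      * A.map (Biset.res (mhB (K := L) (H := K) (G := H))) β)
  have hM2 := A.mackey (mhB (K := L) (H := K) (G := G))
    (mhC (K := K) (H := H) (G := G))
    (q124 (L := L) (K := K) (H := H) (G := G))
    (MonoidHom.snd L (K × H × G))
    (fun _ => rfl) ?_ ?_
    (A.map (Biset.res (mhA (K := K) (H := H) (G := G))) β
      * A.map (Biset.res (mhB (K := K) (H := H) (G := G))) γ)
  · rw [hM1, hM2, A.frob2, A.frob1, A.map_res_res, A.map_res_res,
      A.res_mul, A.res_mul, A.map_res_res, A.map_res_res, A.map_res_res,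
      A.map_res_res, A.map_ind_ind, A.map_ind_ind]
    rw [show (mhB (K := L) (H := H) (G := G)).comp q134
        = (q34 (L := L) (K := K) (H := H) (G := G)) from MonoidHom.ext fun _ => rfl,
      show (mhA (K := L) (H := K) (G := H)).comp q123
        = (q12 (L := L) (K := K) (H := H) (G := G)) from MonoidHom.ext fun _ => rfl,
      show (mhB (K := L) (H := K) (G := H)).comp q123
        = (q23 (L := L) (K := K) (H := H) (G := G)) from MonoidHom.ext fun _ => rfl,
      show (mhC (K := L) (H := H) (G := G)).comp q134
        = (q14 (L := L) (K := K) (H := H) (G := G)) from MonoidHom.ext fun _ => rfl,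
      show (mhA (K := L) (H := K) (G := G)).comp q124
        = (q12 (L := L) (K := K) (H := H) (G := G)) from MonoidHom.ext fun _ => rfl,
      show (mhA (K := K) (H := H) (G := G)).comp (MonoidHom.snd L (K × H × G))
        = (q23 (L := L) (K := K) (H := H) (G := G)) from MonoidHom.ext fun _ => rfl,
      show (mhB (K := K) (H := H) (G := G)).comp (MonoidHom.snd L (K × H × G))
        = (q34 (L := L) (K := K) (H := H) (G := G)) from MonoidHom.ext fun _ => rfl,
      show (mhC (K := L) (H := K) (G := G)).comp q124
        = (q14 (L := L) (K := K) (H := H) (G := G)) from MonoidHom.ext fun _ => rfl]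
    rw [mul_assoc]
  · intro p hp
    refine ⟨(p.1.1, p.2), ?_, rfl⟩
    show (p.1.1, p.2.1, p.2.2.2) = p.1
    exact Prod.ext rfl hp.symm
  · intro y
    exact ⟨(1, y), rfl⟩
  · intro p hp
    have e1 : p.1.1 = p.2.1 := congrArg Prod.fst hp
    have e2 : p.1.2.1 = p.2.2.2 := congrArg Prod.snd hp
    refine ⟨(p.1.1, p.2.2.1, p.1.2.1, p.1.2.2), rfl, ?_⟩
    show (p.1.1, p.2.2.1, p.1.2.1) = p.2
    exact Prod.ext e1 (Prod.ext rfl e2)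
  · intro y
    exact ⟨(y.1, y.2, 1), rfl⟩

end assoc

end GreenBF

/-- The swap `G × H × K ≃* K × H × G`. -/
def tripleSwap {K H G : Type} [Group K] [Group H] [Group G] :
    (G × H × K) ≃* (K × H × G) where
  toFun x := (x.2.2, x.2.1, x.1)
  invFun y := (y.2.2, y.2.1, y.1)
  left_inv _ := rfl
  right_inv _ := rfl
  map_mul' _ _ := rfl

namespace GreenBF

variable {k : Type} [CommRing k] (A : GreenBF k) (s : AntiInvol A)

section bull

variable {K H G D : Type} [Group K] [Fintype K] [Group H] [Fintype H]
  [Group G] [Fintype G] [Group D] [Fintype D]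

lemma sapp_one :
    s.app G (haveI := A.ring G; (1 : A.obj G)) = (haveI := A.ring G; (1 : A.obj G)) := by
  letI := A.ring G
  have h : ∀ b : A.obj G, s.app G 1 * b = b := by
    intro b
    conv_lhs => rw [← s.invol G b]
    rw [← s.anti, mul_one, s.invol]
  have h1 := h 1
  rwa [mul_one] at h1

lemma sapp_sub (a b : A.obj G) :
    haveI := A.ring G
    s.app G (a - b) = s.app G a - s.app G b := by
  letI := A.ring G
  have h : s.app G (a - b) + s.app G b = s.app G a := by
    rw [← s.app_add, sub_add_cancel]
  exact eq_sub_of_add_eq h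

lemma bull_add (α β : A.obj (H × G)) :
    haveI := A.ring (H × G); haveI := A.ring (G × H)
    A.bull s (α + β) = A.bull s α + A.bull s β := by
  letI := A.ring (H × G); letI := A.ring (G × H)
  show A.map (Biset.isoB (MulEquiv.prodComm : H × G ≃* G × H)) (s.app (H × G) (α + β))
    = A.map (Biset.isoB (MulEquiv.prodComm : H × G ≃* G × H)) (s.app (H × G) α)
      + A.map (Biset.isoB (MulEquiv.prodComm : H × G ≃* G × H)) (s.app (H × G) β)
  rw [s.app_add, A.map_add]

lemma bull_sub (α β : A.obj (H × G)) :
    haveI := A.ring (H × G); haveI := A.ring (G × H)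
    A.bull s (α - β) = A.bull s α - A.bull s β := by
  letI := A.ring (H × G); letI := A.ring (G × H)
  show A.map (Biset.isoB (MulEquiv.prodComm : H × G ≃* G × H)) (s.app (H × G) (α - β))
    = A.map (Biset.isoB (MulEquiv.prodComm : H × G ≃* G × H)) (s.app (H × G) α)
      - A.map (Biset.isoB (MulEquiv.prodComm : H × G ≃* G × H)) (s.app (H × G) β)
  rw [A.sapp_sub, A.map_sub']

lemma bull_ind_one (u : D →* H × G) :
    A.bull s (A.map (Biset.ind u) (haveI := A.ring D; (1 : A.obj D)))
      = A.map (Biset.ind ((MulEquiv.prodComm : H × G ≃* G × H).toMonoidHom.comp u))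
          (haveI := A.ring D; (1 : A.obj D)) := by
  letI := A.ring D
  show A.map (Biset.ind (MulEquiv.prodComm : H × G ≃* G × H).toMonoidHom)
      (s.app (H × G) (A.map (Biset.ind u) 1)) = _
  rw [s.natural, A.sapp_one, A.map_ind_ind]

lemma bull_catId : A.bull s (A.catId G) = A.catId G := by
  letI := A.ring G
  rw [A.catId_eq, A.bull_ind_one]
  rw [show (MulEquiv.prodComm : G × G ≃* G × G).toMonoidHom.comp (diagHom G)
    = diagHom G from MonoidHom.ext fun _ => rfl]

lemma bull_eq_res (α : A.obj (H × G)) :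
    A.bull s α = A.map
      (Biset.res (MulEquiv.prodComm : G × H ≃* H × G).toMonoidHom)
      (s.app (H × G) α) := by
  show A.map (Biset.ind (MulEquiv.prodComm : H × G ≃* G × H).toMonoidHom)
      (s.app (H × G) α) = _
  rw [A.map_ind_eq_res,
    show (MulEquiv.prodComm : H × G ≃* G × H).symm
      = (MulEquiv.prodComm : G × H ≃* H × G) from MulEquiv.ext fun _ => rfl]

lemma bull_pcomp (α : A.obj (K × H)) (β : A.obj (H × G)) :
    A.bull s (A.pcomp α β) = A.pcomp (A.bull s β) (A.bull s α) := by
  letI := A.ring (K × H); letI := A.ring (H × G); letI := A.ring (K × G)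
  letI := A.ring (K × H × G); letI := A.ring (G × H × K)
  rw [A.bull_eq_res s β, A.bull_eq_res s α,
    A.pcompF (K := G) (H := H) (G := K), A.map_res_res, A.map_res_res]
  show A.map (Biset.ind (MulEquiv.prodComm : K × G ≃* G × K).toMonoidHom)
      (s.app (K × G) (A.pcomp α β)) = _
  rw [A.pcompF (K := K) (H := H) (G := G) α β, s.natural, s.anti,
    s.natural, s.natural, A.map_ind_ind]
  rw [show (MulEquiv.prodComm : K × G ≃* G × K).toMonoidHom.comp
        (mhC (K := K) (H := H) (G := G))
      = (mhC (K := G) (H := H) (G := K)).comp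
        ((tripleSwap (K := K) (H := H) (G := G)).symm.toMonoidHom)
      from MonoidHom.ext fun _ => rfl]
  rw [← A.map_ind_ind, A.map_ind_eq_res, MulEquiv.symm_symm,
    A.res_mul, A.map_res_res, A.map_res_res]
  rw [show (mhB (K := K) (H := H) (G := G)).comp
        (tripleSwap (K := K) (H := H) (G := G)).toMonoidHom
      = (MulEquiv.prodComm : G × H ≃* H × G).toMonoidHom.comp
        (mhA (K := G) (H := H) (G := K)) from MonoidHom.ext fun _ => rfl]
  rw [show (mhA (K := K) (H := H) (G := G)).comp
        (tripleSwap (K := K) (H := H) (G := G)).toMonoidHom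
      = (MulEquiv.prodComm : H × K ≃* K × H).toMonoidHom.comp
        (mhB (K := G) (H := H) (G := K)) from MonoidHom.ext fun _ => rfl]

end bull

end GreenBF

/-- Auxiliary hom for the `Def ∘ Inf = Id` computation. -/
def gfA {G Q : Type} [Group G] [Group Q] (π : G →* Q) : G × Q →* Q × G × Q :=
  MonoidHom.mk' (fun p => (π p.1, p.1, p.2)) (fun a b => Prod.ext (map_mul π a.1 b.1) rfl)

namespace GreenBF

variable {k : Type} [CommRing k] (A : GreenBF k) (s : AntiInvol A)

section pi

variable {G Q : Type} [Group G] [Fintype G] [Group Q] [Fintype Q]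
  (π : G →* Q)

lemma bsElt_res (hπ : Function.Surjective π) : A.bsElt (Biset.res π)
    = A.map (Biset.ind ((MonoidHom.id G).prod π)) (haveI := A.ring G; (1 : A.obj G)) := by
  refine A.bsElt_eq (Biset.res π) (show (Biset.res π).carrier from (1 : Q))
    ((MonoidHom.id G).prod π) ?_ ?_ ?_
  · intro d
    show π d * 1 * (π d)⁻¹ = (show (Biset.res π).carrier from (1 : Q))
    show π d * 1 * (π d)⁻¹ = (1 : Q)
    simp
  · intro a ha
    have ha' : π a.1 * 1 * a.2⁻¹ = 1 := ha
    rw [mul_one, mul_inv_eq_one] at ha'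
    exact ⟨a.1, Prod.ext rfl ha'⟩
  · intro z
    obtain ⟨w, hw⟩ := hπ (show Q from z)
    refine ⟨(w, 1), ?_⟩
    show π w * 1 * (1 : Q)⁻¹ = (show Q from z)
    rw [hw]; simp
    exact mul_one _

lemma bsElt_resop (hπ : Function.Surjective π) : A.bsElt ((Biset.res π).op)
    = A.map (Biset.ind (π.prod (MonoidHom.id G))) (haveI := A.ring G; (1 : A.obj G)) := by
  refine A.bsElt_eq ((Biset.res π).op) (show ((Biset.res π).op).carrier from (1 : Q))
    (π.prod (MonoidHom.id G)) ?_ ?_ ?_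
  · intro d
    show π d * 1 * (π d)⁻¹ = (show ((Biset.res π).op).carrier from (1 : Q))
    show π d * 1 * (π d)⁻¹ = (1 : Q)
    simp
  · intro a ha
    have ha' : π a.2 * 1 * a.1⁻¹ = 1 := ha
    rw [mul_one, mul_inv_eq_one] at ha'
    exact ⟨a.2, Prod.ext ha' rfl⟩
  · intro z
    obtain ⟨w, hw⟩ := hπ (show Q from z)
    refine ⟨(1, w), ?_⟩
    show π w * 1 * (1 : Q)⁻¹ = (show Q from z)
    rw [hw]; simp
    exact mul_one _

lemma pcomp_g_f (hπ : Function.Surjective π) :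
    A.pcomp (A.bsElt ((Biset.res π).op)) (A.bsElt (Biset.res π)) = A.catId Q := by
  letI := A.ring G
  letI := A.ring (Q × G × Q)
  letI := A.ring (G × Q)
  rw [A.bsElt_res π hπ, A.bsElt_resop π hπ, A.pcompF]
  have hM := A.mackey (mhA (K := Q) (H := G) (G := Q)) (π.prod (MonoidHom.id G))
    (gfA π) (MonoidHom.fst G Q) (fun _ => rfl) ?_ ?_ (1 : A.obj G)
  · rw [hM, A.res_one, A.frob2, one_mul, A.map_res_res]
    rw [show (mhB (K := Q) (H := G) (G := Q)).comp (gfA π)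
      = MonoidHom.id (G × Q) from MonoidHom.ext fun _ => rfl]
    rw [A.res_id, A.map_ind_ind, A.map_ind_ind]
    rw [show ((mhC (K := Q) (H := G) (G := Q)).comp (gfA π)).comp
        ((MonoidHom.id G).prod π)
      = (diagHom Q).comp π from MonoidHom.ext fun _ => rfl]
    rw [← A.map_ind_ind, A.ind_one_surj π hπ, ← A.catId_eq]
  · intro p hp
    have e1 : p.1.1 = π p.2 := congrArg Prod.fst hp
    have e2 : p.1.2.1 = p.2 := congrArg Prod.snd hp
    refine ⟨(p.1.2.1, p.1.2.2), ?_, e2⟩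
    show (π p.1.2.1, p.1.2.1, p.1.2.2) = p.1
    exact Prod.ext ((congrArg π e2).trans e1.symm) rfl
  · intro y
    exact ⟨(y.1, y.2, 1), rfl⟩

lemma bull_f (hπ : Function.Surjective π) : A.bull s (A.bsElt (Biset.res π)) = A.bsElt ((Biset.res π).op) := by
  rw [A.bsElt_res π hπ, A.bsElt_resop π hπ, A.bull_ind_one]
  rw [show (MulEquiv.prodComm : G × Q ≃* Q × G).toMonoidHom.comp
      ((MonoidHom.id G).prod π)
    = π.prod (MonoidHom.id G) from MonoidHom.ext fun _ => rfl]

lemma bull_g (hπ : Function.Surjective π) : A.bull s (A.bsElt ((Biset.res π).op)) = A.bsElt (Biset.res π) := by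
  rw [A.bsElt_res π hπ, A.bsElt_resop π hπ, A.bull_ind_one]
  rw [show (MulEquiv.prodComm : Q × G ≃* G × Q).toMonoidHom.comp
      (π.prod (MonoidHom.id G))
    = (MonoidHom.id G).prod π from MonoidHom.ext fun _ => rfl]

lemma dAInf_eq (ω : A.obj (Q × Q)) :
    A.dAInf π ω = (haveI := A.ring (G × G); haveI := A.ring (Q × Q)
      A.catId G + A.pcomp (A.bsElt (Biset.res π))
        (A.pcomp (ω - A.catId Q) (A.bsElt ((Biset.res π).op)))) := rfl

lemma dAInf_pcomp (hπ : Function.Surjective π) (ω ω' : A.obj (Q × Q)) :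
    A.pcomp (A.dAInf π ω) (A.dAInf π ω') = A.dAInf π (A.pcomp ω ω') := by
  letI := A.ring (Q × Q)
  letI := A.ring (G × G)
  letI := A.ring (G × Q)
  letI := A.ring (Q × G)
  set f := A.bsElt (Biset.res π) with hf
  set g := A.bsElt ((Biset.res π).op) with hg
  have key : ∀ μ ν : A.obj (Q × Q),
      A.pcomp (A.pcomp f (A.pcomp μ g)) (A.pcomp f (A.pcomp ν g))
        = A.pcomp f (A.pcomp (A.pcomp μ ν) g) := by
    intro μ ν
    rw [A.pcomp_assoc f (A.pcomp μ g), A.pcomp_assoc μ g,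
      ← A.pcomp_assoc g f, A.pcomp_g_f π hπ, A.pcomp_catId_left,
      ← A.pcomp_assoc μ ν g]
  have hFadd : ∀ x y : A.obj (Q × Q),
      A.pcomp f (A.pcomp x g) + A.pcomp f (A.pcomp y g)
        = A.pcomp f (A.pcomp (x + y) g) := by
    intro x y
    rw [A.pcomp_add_left x y g, A.pcomp_add_right]
  rw [A.dAInf_eq, A.dAInf_eq, A.dAInf_eq]
  rw [A.pcomp_add_left, A.pcomp_catId_left, A.pcomp_add_right,
    A.pcomp_catId_right, key]
  rw [A.pcomp_sub_left ω (A.catId Q) (ω' - A.catId Q), A.pcomp_catId_left,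
    A.pcomp_sub_right ω ω' (A.catId Q), A.pcomp_catId_right]
  rw [add_assoc, hFadd, hFadd]
  rw [show (ω' - A.catId Q) + ((ω - A.catId Q)
      + (A.pcomp ω ω' - ω - (ω' - A.catId Q)))
    = A.pcomp ω ω' - A.catId Q from by abel]

lemma dAInf_catId : A.dAInf π (A.catId Q) = A.catId G := by
  letI := A.ring (Q × Q)
  letI := A.ring (G × G)
  rw [A.dAInf_eq, sub_self, A.pcomp_zero_left, A.pcomp_zero_right, add_zero]

lemma dAInf_bull (hπ : Function.Surjective π) (ω : A.obj (Q × Q)) :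
    A.bull s (A.dAInf π ω) = A.dAInf π (A.bull s ω) := by
  letI := A.ring (Q × Q)
  letI := A.ring (G × G)
  rw [A.dAInf_eq, A.dAInf_eq, A.bull_add, A.bull_catId, A.bull_pcomp,
    A.bull_pcomp, A.bull_f s π hπ, A.bull_g s π hπ, A.bull_sub, A.bull_catId,
    A.pcomp_assoc]

lemma dAInf_extract (hπ : Function.Surjective π) (ω : A.obj (Q × Q)) :
    A.pcomp (A.bsElt ((Biset.res π).op))
      (A.pcomp (A.dAInf π ω) (A.bsElt (Biset.res π))) = ω := by
  letI := A.ring (Q × Q)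
  letI := A.ring (G × G)
  rw [A.dAInf_eq]
  rw [A.pcomp_add_left, A.pcomp_catId_left,
    A.pcomp_assoc (A.bsElt (Biset.res π)), A.pcomp_assoc (ω - A.catId Q),
    A.pcomp_g_f π hπ, A.pcomp_catId_right, A.pcomp_add_right,
    A.pcomp_g_f π hπ, ← A.pcomp_assoc, A.pcomp_g_f π hπ, A.pcomp_catId_left]
  abel

end pi

end GreenBF

/-! STATEMENT 18: for a ★-Green biset functor `A` and `N ⊴ G`, the map `dAInf`
commutes with the duality `•` on automorphisms; consequently it restricts to a
group monomorphism on orthogonal automorphisms, and reflects orthogonality. -/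
theorem statement18 (k : Type) [CommRing k] (A : GreenBF k) (s : AntiInvol A)
    (G : Type) [Group G] [Fintype G] (N : Subgroup G) [N.Normal] [Fintype (G ⧸ N)] :
    (∀ ω : A.obj ((G ⧸ N) × (G ⧸ N)), A.IsIsoP ω →
      A.dAInf (QuotientGroup.mk' N) (A.bull s ω) =
        A.bull s (A.dAInf (QuotientGroup.mk' N) ω))
    ∧ (∀ ω : A.obj ((G ⧸ N) × (G ⧸ N)),
        A.IsOrthIso s ω → A.IsOrthIso s (A.dAInf (QuotientGroup.mk' N) ω))
    ∧ (∀ ω : A.obj ((G ⧸ N) × (G ⧸ N)), A.IsIsoP ω →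
        A.IsOrthIso s (A.dAInf (QuotientGroup.mk' N) ω) → A.IsOrthIso s ω) := by
  have hπ : Function.Surjective (QuotientGroup.mk' N) := QuotientGroup.mk'_surjective N
  refine ⟨?_, ?_, ?_⟩
  · intro ω _
    exact (A.dAInf_bull s (QuotientGroup.mk' N) hπ ω).symm
  · rintro ω ⟨h1, h2⟩
    constructor
    · rw [A.dAInf_bull s _ hπ, A.dAInf_pcomp _ hπ, h1, A.dAInf_catId _]
    · rw [A.dAInf_bull s _ hπ, A.dAInf_pcomp _ hπ, h2, A.dAInf_catId _]
  · rintro ω _ ⟨h1, h2⟩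
    rw [A.dAInf_bull s _ hπ, A.dAInf_pcomp _ hπ] at h1 h2
    constructor
    · have he := A.dAInf_extract (QuotientGroup.mk' N) hπ (A.pcomp ω (A.bull s ω))
      rw [h1, A.pcomp_catId_left, A.pcomp_g_f _ hπ] at he
      exact he.symm
    · have he := A.dAInf_extract (QuotientGroup.mk' N) hπ (A.pcomp (A.bull s ω) ω)
      rw [h2, A.pcomp_catId_left, A.pcomp_g_f _ hπ] at he
      exact he.symm
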